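/- Let A = B + N where N has at most m nonzero columns, let V_j be a subspace of R^d, and let V* be a k-dimensional subspace with ‖Π_{V*}^⊥ B‖_F² ≤ ξ. Let u_1,...,u_N be the projections of the columns of A orthogonal to V_j, and suppose the m largest (by norm) of these have total squared norm less than (μ − ξ)/2 where μ = Σ_i ‖u_i‖². Then the subspace V' = V_j + V* satisfies ‖Π_{V'}^⊥ A‖_F² ≤ (μ + ξ)/2. -/

import Mathlib

lemma proj_orth_mono {d : ℕ} (U W : Submodule ℝ (EuclideanSpace ℝ (Fin d))) (h : U ≤ W)
    (x : EuclideanSpace ℝ (Fin d)) :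
    ‖(Submodule.orthogonalProjectionOnto Wᗮ x : EuclideanSpace ℝ (Fin d))‖ ≤
      ‖(Submodule.orthogonalProjectionOnto Uᗮ x : EuclideanSpace ℝ (Fin d))‖ := by
  have h' : Wᗮ ≤ Uᗮ := Submodule.orthogonal_le h
  rw [← Submodule.orthogonalProjectionOnto_starProjection_of_le h' x]
  calc ‖(Submodule.orthogonalProjectionOnto Wᗮ (Submodule.orthogonalProjectionOnto Uᗮ x : EuclideanSpace ℝ (Fin d)) :
        EuclideanSpace ℝ (Fin d))‖
      ≤ 1 * ‖(Submodule.orthogonalProjectionOnto Uᗮ x : EuclideanSpace ℝ (Fin d))‖ :=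
        (Submodule.orthogonalProjectionOnto Wᗮ).le_of_opNorm_le (Submodule.orthogonalProjectionOnto_norm_le _) _
    _ = _ := one_mul _


/-- Case 2 of Lemma 3 of the paper.  The columns of `A` are `a i`; the inlier matrix `B`
has columns `b i` agreeing with `a i` off the outlier set `O` (of size at most `m`) and
zero on it.  `V*` is a `k`-dimensional subspace with `∑ᵢ ‖Π_{V*}^⊥ b i‖² ≤ ξ`, and
`u i = Π_{V_j}^⊥ (a i)` with `μ = ∑ᵢ ‖u i‖²`.  If every `m` columns of `u` have total
squared norm less than `(μ − ξ)/2`, then `V' = V_j + V*` satisfies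
`∑ᵢ ‖Π_{V'}^⊥ a i‖² ≤ (μ + ξ)/2`. -/
theorem stmt_11 (d N m k : ℕ) (a b : Fin N → EuclideanSpace ℝ (Fin d))
    (O : Finset (Fin N)) (hOm : O.card ≤ m)
    (hb : ∀ i ∉ O, b i = a i) (hb0 : ∀ i ∈ O, b i = 0)
    (Vj Vstar : Submodule ℝ (EuclideanSpace ℝ (Fin d)))
    (hk : Module.finrank ℝ Vstar = k)
    (ξ : ℝ)
    (hin : ∑ i, ‖(Submodule.orthogonalProjectionOnto Vstarᗮ (b i) : EuclideanSpace ℝ (Fin d))‖ ^ 2 ≤ ξ)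
    (u : Fin N → EuclideanSpace ℝ (Fin d))
    (hu : ∀ i, u i = (Submodule.orthogonalProjectionOnto Vjᗮ (a i) : EuclideanSpace ℝ (Fin d)))
    (μ : ℝ) (hμ : μ = ∑ i, ‖u i‖ ^ 2)
    (hlargest : ∀ T : Finset (Fin N), T.card ≤ m → ∑ i ∈ T, ‖u i‖ ^ 2 < (μ - ξ) / 2) :
    ∑ i, ‖(Submodule.orthogonalProjectionOnto (Vj ⊔ Vstar)ᗮ (a i) : EuclideanSpace ℝ (Fin d))‖ ^ 2 ≤
      (μ + ξ) / 2 := by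
  set f : Fin N → ℝ := fun i =>
    ‖(Submodule.orthogonalProjectionOnto (Vj ⊔ Vstar)ᗮ (a i) : EuclideanSpace ℝ (Fin d))‖ ^ 2 with hf
  have hsplit : ∑ i ∈ O, f i + ∑ i ∈ Oᶜ, f i = ∑ i, f i := Finset.sum_add_sum_compl O f
  have h1 : ∑ i ∈ O, f i ≤ ∑ i ∈ O, ‖u i‖ ^ 2 := by
    refine Finset.sum_le_sum fun i _ => ?_
    have := proj_orth_mono Vj (Vj ⊔ Vstar) le_sup_left (a i)
    rw [hu i]
    exact pow_le_pow_left₀ (norm_nonneg _) this 2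
  have h2 : ∑ i ∈ Oᶜ, f i ≤ ξ := by
    have hle : ∑ i ∈ Oᶜ, f i ≤ ∑ i ∈ Oᶜ,
        ‖(Submodule.orthogonalProjectionOnto Vstarᗮ (b i) : EuclideanSpace ℝ (Fin d))‖ ^ 2 := by
      refine Finset.sum_le_sum fun i hi => ?_
      have hbi : b i = a i := hb i (by simpa using hi)
      have := proj_orth_mono Vstar (Vj ⊔ Vstar) le_sup_right (a i)
      rw [hbi]
      exact pow_le_pow_left₀ (norm_nonneg _) this 2
    refine hle.trans (le_trans ?_ hin)
    exact Finset.sum_le_sum_of_subset_of_nonneg (Finset.subset_univ _)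
      (fun i _ _ => sq_nonneg _)
  have h3 : ∑ i ∈ O, ‖u i‖ ^ 2 < (μ - ξ) / 2 := hlargest O hOm
  have : ∑ i, f i ≤ (μ + ξ) / 2 := by linarith
  simpa [hf] using this
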